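/- arXiv:1103.4420 — 3 statements merged into one kernel-verified Lean document; each statement's English description precedes it below -/
import Mathlib

section
/- (Subadditive lemma, explicit version) Let η be a field with values in a separable Fréchet space Y that is c.a.d.i. with parameter (g,c), c.l. with parameter (t,α), and R_ℓ-invariant. Let V be an open convex neighbourhood of 0 in Y, y ∈ Y, C := y + V, and for ε ∈ (0,1) set C(y,ε) := y + (1−ε)V. For m, n ∈ ℕ* set L(m) := m + ⌈g(m)⌉ + ℓ, k_{m,n} := ⌊n/L(m)⌋ and ρ_{m,n} := 1 − k_{m,n}^d m^d / n^d. Then for every ε ∈ (0,1) there exists M(ε) such that for every m ≥ M there exists N(m,ε) such that for all n ≥ N: |Λ(n)|^{−1} log P(m_{Λ(n)} η ∈ C) ≥ |Λ(m)|^{−1} log P(m_{Λ(m)} η ∈ C(y,ε)) − c(m)/|Λ(m)| + ρ_{m,n} log α(V). -/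
/-!
Tile `Λ(n)` by `k^d` copies of `Λ(m)` placed on a grid of spacing `L(m)`, each corner rounded
down to `(ℓℤ)^d`. By `R_ℓ`-invariance every copy carries the event `m_{Λ(m)} η ∈ C(y,ε)` with
the same probability, and since the copies are more than `g(m)` apart, c.a.d.i. makes these
`k^d` events jointly at least `e^{-k^d c(m)}` times as likely as independent ones. Local control
then puts each of the `ρ_{m,n} n^d` uncovered sites into `t(V) V`, at a cost `α(V)` per site.
On the resulting event `m_{Λ(n)} η = (1 - ρ) a + ρ b` with `a ∈ y + (1 - ε) V` (the mean of the
block means) and `b ∈ t(V) V`; writing `-y = σ⁻¹ (σ (-y))` with `σ (-y) ∈ V`, this lies in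
`y + V` as soon as `ρ (t(V) + σ⁻¹) ≤ ε`, which holds for `m` and then `n` large since
`ρ_{m,n} ≤ d (g(m) + 1 + ℓ) / m + d L(m) / n`. Taking logarithms gives the bound.
-/

open MeasureTheory Filter Topology Pointwise

noncomputable section

/-- The lattice ℤ^d. -/
abbrev ZLat (d : ℕ) := Fin d → ℤ

/-- The box Λ(z;n) = z + ([0,n) ∩ ℤ)^d. -/
def box (d : ℕ) (z : ZLat d) (n : ℕ) : Finset (ZLat d) :=
  Fintype.piFinset fun k => Finset.Ico (z k) (z k + n)

/-- Sup-norm distance on ℤ^d. -/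
def supdist {d : ℕ} (x y : ZLat d) : ℝ :=
  ((Finset.univ.sup fun k => (x k - y k).natAbs : ℕ) : ℝ)

/-- Configuration space Y^{ℤ^d}. -/
abbrev Cfg (d : ℕ) (Y : Type*) := ZLat d → Y

section Defs

variable {d : ℕ} {Y : Type*}
variable [TopologicalSpace Y] [AddCommGroup Y] [Module ℝ Y] [MeasurableSpace Y]

/-- Conditions on the decoupling parameters (g, c): nonnegative, g(n)/n → 0 and
c(n)/|Λ(n)| → 0. -/
structure CadiParams (d : ℕ) (g c : ℕ → ℝ) : Prop where
  g_nonneg : ∀ n, 0 ≤ g n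
  c_nonneg : ∀ n, 0 ≤ c n
  g_small : Tendsto (fun n : ℕ => g n / n) atTop (𝓝 0)
  c_small : Tendsto (fun n : ℕ => c n / (n : ℝ) ^ d) atTop (𝓝 0)

/-- μ (the law of a field η) is convexly asymptotically decoupled from below (c.a.d.i.)
with parameter (g, c): for every box Λ(z;n), every finite S at sup-distance > g(n) from
the box, and all open convex C, D in the respective finite products,
P(η_{Λ(z;n)} ∈ C, η_S ∈ D) ≥ e^{-c(n)} P(η_{Λ(z;n)} ∈ C) P(η_S ∈ D). -/
def IsCadi (μ : Measure (Cfg d Y)) (g c : ℕ → ℝ) : Prop :=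
  ∀ (z : ZLat d) (n : ℕ), 0 < n → ∀ S : Finset (ZLat d),
    (∀ x ∈ S, ∀ w ∈ box d z n, g n < supdist x w) →
    ∀ C : Set (↥(box d z n) → Y), IsOpen C → Convex ℝ C →
    ∀ D : Set (↥S → Y), IsOpen D → Convex ℝ D →
      ENNReal.ofReal (Real.exp (-(c n))) * μ {ξ | (fun w : ↥(box d z n) => ξ w.1) ∈ C}
          * μ {ξ | (fun w : ↥S => ξ w.1) ∈ D}
        ≤ μ {ξ | (fun w : ↥(box d z n) => ξ w.1) ∈ C ∧ (fun w : ↥S => ξ w.1) ∈ D}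

/-- Conditions on the local-control parameters (t, α): on open convex neighbourhoods of 0,
t takes values in (0,∞) and α in (0,1]. -/
structure ClParams (t α : Set Y → ℝ) : Prop where
  t_pos : ∀ V : Set Y, IsOpen V → Convex ℝ V → (0 : Y) ∈ V → 0 < t V
  α_pos : ∀ V : Set Y, IsOpen V → Convex ℝ V → (0 : Y) ∈ V → 0 < α V
  α_le_one : ∀ V : Set Y, IsOpen V → Convex ℝ V → (0 : Y) ∈ V → α V ≤ 1

/-- μ (the law of a field η) is locally controlled (c.l.) with parameter (t, α):
for every open convex neighbourhood V of 0, every site z, every finite S ⊆ ℤ^d \ {z}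
and every open convex D ⊆ Y^S, P(η(z) ∈ t(V)·V, η_S ∈ D) ≥ α(V) P(η_S ∈ D). -/
def IsCl (μ : Measure (Cfg d Y)) (t α : Set Y → ℝ) : Prop :=
  ∀ V : Set Y, IsOpen V → Convex ℝ V → (0 : Y) ∈ V →
  ∀ z : ZLat d, ∀ S : Finset (ZLat d), z ∉ S →
  ∀ D : Set (↥S → Y), IsOpen D → Convex ℝ D →
    ENNReal.ofReal (α V) * μ {ξ | (fun w : ↥S => ξ w.1) ∈ D}
      ≤ μ {ξ | ξ z ∈ (t V • V : Set Y) ∧ (fun w : ↥S => ξ w.1) ∈ D}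

/-- μ is invariant under the translations of the sublattice R_ℓ = (ℓℤ)^d. -/
def IsRlInv (μ : Measure (Cfg d Y)) (ℓ : ℕ) : Prop :=
  ∀ a : ZLat d, (∀ k, (ℓ : ℤ) ∣ a k) →
    Measure.map (fun ξ : Cfg d Y => fun z => ξ (z + a)) μ = μ

/-- Empirical mean m_Λ ξ = |Λ|⁻¹ Σ_{z∈Λ} ξ(z) over a finite box. -/
def mAvg (Λ : Finset (ZLat d)) (ξ : Cfg d Y) : Y :=
  (Λ.card : ℝ)⁻¹ • ∑ z ∈ Λ, ξ z

/-- Finite-volume pressure p_Λ(λ) = |Λ|⁻¹ log E[exp λ(Σ_{z∈Λ} η(z))], valued in [-∞,+∞]. -/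
def pressΛ (μ : Measure (Cfg d Y)) (Λ : Finset (ZLat d)) (l : Y →L[ℝ] ℝ) : EReal :=
  (((Λ.card : ℝ)⁻¹ : ℝ) : EReal) *
    ENNReal.log (∫⁻ ξ, ENNReal.ofReal (Real.exp (l (∑ z ∈ Λ, ξ z))) ∂μ)

/-- Entropy s(y) = inf over open convex sets A ∋ y of
liminf_n |Λ(n)|⁻¹ log P(m_{Λ(n)} η ∈ A). -/
def entropy (μ : Measure (Cfg d Y)) (y : Y) : EReal :=
  ⨅ A ∈ {A : Set Y | IsOpen A ∧ Convex ℝ A ∧ y ∈ A},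
    Filter.liminf
      (fun n : ℕ => ((((box d 0 n).card : ℝ)⁻¹ : ℝ) : EReal) *
        ENNReal.log (μ {ξ | mAvg (box d 0 n) ξ ∈ A}))
      Filter.atTop

end Defs

lemma exists_pos_smul_mem_of_mem_nhds {Y : Type*} [TopologicalSpace Y] [AddCommGroup Y]
    [Module ℝ Y] [ContinuousSMul ℝ Y] {V : Set Y} (hV : V ∈ 𝓝 (0 : Y)) (x : Y) :
    ∃ σ : ℝ, 0 < σ ∧ σ • x ∈ V := by
  have hσV : ∀ᶠ σ in 𝓝[>] (0 : ℝ), σ • x ∈ V :=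
    ((continuous_id.smul continuous_const).tendsto' (0 : ℝ) 0 (zero_smul ℝ x)).mono_left
      nhdsWithin_le_nhds hV
  obtain ⟨σ, hσx, hσ⟩ := (hσV.and self_mem_nhdsWithin).exists
  exact ⟨σ, hσ, hσx⟩

-- With `a = |Λ(m)|` and `b = |Λ(n)|`: the logarithm of the gluing bound, normalised per site.
lemma inv_mul_log_add_le {P Q : ENNReal} (hP : P ≤ 1) {a b c A : ℝ} {K r : ℕ} (ha : 0 < a)
    (hb : 0 < b) (hKab : K * a ≤ b) (hc : 0 ≤ c) (hA : 0 < A)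
    (h : ENNReal.ofReal A ^ r * (ENNReal.ofReal (Real.exp (-c)) ^ K * P ^ K) ≤ Q) :
    ((a⁻¹ : ℝ) : EReal) * ENNReal.log P + ((-c / a + r / b * Real.log A : ℝ) : EReal)
      ≤ ((b⁻¹ : ℝ) : EReal) * ENNReal.log Q := by
  rcases eq_or_ne P 0 with rfl | hP0
  · simp [EReal.mul_bot_of_pos (EReal.coe_pos.2 (inv_pos.2 ha))]
  have hPtop : P ≠ ⊤ := ne_top_of_le_ne_top ENNReal.one_ne_top hP
  set p := P.toReal
  have hp : 0 < p := ENNReal.toReal_pos hP0 hPtop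
  have hp1 : p ≤ 1 := ENNReal.toReal_le_of_le_ofReal zero_le_one (by simpa using hP)
  have hlower : 0 < A ^ r * (Real.exp (-c) ^ K * p ^ K) := by positivity
  have hlogQ : ((Real.log (A ^ r * (Real.exp (-c) ^ K * p ^ K)) : ℝ) : EReal)
      ≤ ENNReal.log Q := by
    rw [← ENNReal.log_ofReal_of_pos hlower]
    refine ENNReal.log_monotone (le_of_eq_of_le ?_ h)
    rw [ENNReal.ofReal_mul (by positivity), ENNReal.ofReal_mul (by positivity),
      ENNReal.ofReal_pow hA.le, ENNReal.ofReal_pow (Real.exp_nonneg _), ENNReal.ofReal_pow hp.le,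
      ENNReal.ofReal_toReal hPtop]
  have hlogP : ENNReal.log P = ((Real.log p : ℝ) : EReal) := by
    simp [ENNReal.log, hP0, hPtop, p]
  have hKb : (K : ℝ) / b ≤ a⁻¹ := by
    rw [div_le_iff₀ hb, inv_mul_eq_div, le_div_iff₀ ha]
    exact hKab
  have hreal : a⁻¹ * Real.log p + (-c / a + r / b * Real.log A)
      ≤ b⁻¹ * Real.log (A ^ r * (Real.exp (-c) ^ K * p ^ K)) :=
    calc a⁻¹ * Real.log p + (-c / a + r / b * Real.log A)
        = a⁻¹ * (Real.log p - c) + r / b * Real.log A := by ring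
      _ ≤ K / b * (Real.log p - c) + r / b * Real.log A := by
          gcongr ?_ + _
          exact mul_le_mul_of_nonpos_right hKb (by linarith [Real.log_nonpos hp.le hp1])
      _ = _ := by
          rw [Real.log_mul (by positivity) (by positivity),
            Real.log_mul (by positivity) (by positivity), Real.log_pow, Real.log_pow,
            Real.log_pow, Real.log_exp]
          ring
  rw [hlogP, ← EReal.coe_mul, ← EReal.coe_add]
  refine (EReal.coe_le_coe_iff.2 hreal).trans ?_
  rw [EReal.coe_mul]
  exact mul_le_mul_of_nonneg_left hlogQ (EReal.coe_nonneg.2 (inv_nonneg.2 hb.le))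

section Box

variable {d : ℕ}

lemma mem_box {z x : ZLat d} {n : ℕ} : x ∈ box d z n ↔ ∀ k, z k ≤ x k ∧ x k < z k + n := by
  simp [box, Fintype.mem_piFinset]

lemma card_box (z : ZLat d) (n : ℕ) : (box d z n).card = n ^ d := by
  simp [box, Fintype.card_piFinset]

lemma box_eq_map_addRight (a : ZLat d) (n : ℕ) :
    box d a n = (box d 0 n).map (addRightEmbedding a) := by
  ext x
  simp only [Finset.mem_map, addRightEmbedding_apply, mem_box, Pi.zero_apply, zero_add]
  refine ⟨fun h => ⟨x - a, fun k => ?_, sub_add_cancel x a⟩, ?_⟩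
  · simp only [Pi.sub_apply]; have := h k; omega
  · rintro ⟨w, hw, rfl⟩ k
    simp only [Pi.add_apply]; have := hw k; omega

lemma natAbs_sub_le_supdist (x w : ZLat d) (k : Fin d) :
    ((x k - w k).natAbs : ℝ) ≤ supdist x w := by
  unfold supdist
  exact_mod_cast Finset.le_sup (f := fun k => (x k - w k).natAbs) (Finset.mem_univ k)

end Box

section Mean

variable {d : ℕ} {Y : Type*} [AddCommGroup Y] [Module ℝ Y]

lemma card_div_smul_mAvg (Λ : Finset (ZLat d)) (ξ : Cfg d Y) (a : ℝ) :
    ((Λ.card : ℝ) / a) • mAvg Λ ξ = a⁻¹ • ∑ z ∈ Λ, ξ z := by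
  rcases Λ.eq_empty_or_nonempty with rfl | hΛ
  · simp
  · rw [mAvg, smul_smul, div_mul_eq_mul_div, mul_inv_cancel₀ (by positivity), one_div]

lemma mAvg_eq_add_mAvg_sdiff {U Λ : Finset (ZLat d)} (hUΛ : U ⊆ Λ) (ξ : Cfg d Y) :
    mAvg Λ ξ = ((U.card : ℝ) / Λ.card) • mAvg U ξ
      + (((Λ \ U).card : ℝ) / Λ.card) • mAvg (Λ \ U) ξ := by
  rw [card_div_smul_mAvg, card_div_smul_mAvg, ← smul_add, add_comm,
    Finset.sum_sdiff hUΛ, mAvg]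

lemma mAvg_mem_of_forall_mem {Λ : Finset (ZLat d)} (hΛ : Λ.Nonempty) {ξ : Cfg d Y} {C : Set Y}
    (hC : Convex ℝ C) (h : ∀ z ∈ Λ, ξ z ∈ C) : mAvg Λ ξ ∈ C := by
  rw [mAvg, Finset.smul_sum]
  refine hC.sum_mem (fun _ _ => by positivity) ?_ h
  rw [Finset.sum_const, nsmul_eq_mul, mul_inv_cancel₀ (by simpa using hΛ.ne_empty)]

lemma mAvg_biUnion_mem {ι : Type*} {J : Finset ι} {B : ι → Finset (ZLat d)}
    (hB : (J : Set ι).PairwiseDisjoint B) (hU : (J.biUnion B).Nonempty)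
    {ξ : Cfg d Y} {C : Set Y} (hC : Convex ℝ C) (h : ∀ j ∈ J, mAvg (B j) ξ ∈ C) :
    mAvg (J.biUnion B) ξ ∈ C := by
  have hcard : ((J.biUnion B).card : ℝ) ≠ 0 := by simpa using hU.ne_empty
  have hmean : mAvg (J.biUnion B) ξ
      = ∑ j ∈ J, (((B j).card : ℝ) / (J.biUnion B).card) • mAvg (B j) ξ := by
    rw [Finset.sum_congr rfl fun j _ => card_div_smul_mAvg (B j) ξ _, ← Finset.smul_sum,
      ← Finset.sum_biUnion hB, mAvg]
  rw [hmean]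
  refine hC.sum_mem (fun _ _ => by positivity) ?_ h
  rw [← Finset.sum_div, ← Nat.cast_sum, ← Finset.card_biUnion hB, div_self hcard]

end Mean

section Convexity

variable {Y : Type*} [AddCommGroup Y] [Module ℝ Y] {V : Set Y}

lemma Convex.smul_add_smul_add_smul_mem (hV : Convex ℝ V) (hV0 : (0 : Y) ∈ V) {x y z : Y}
    (hx : x ∈ V) (hy : y ∈ V) (hz : z ∈ V) {a b c : ℝ} (ha : 0 ≤ a) (hb : 0 ≤ b) (hc : 0 ≤ c)
    (habc : a + b + c ≤ 1) : a • x + b • y + c • z ∈ V := by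
  have h := hV.sum_mem (t := Finset.univ) (w := ![a, b, c, 1 - (a + b + c)])
    (z := ![x, y, z, 0]) (fun i _ => by fin_cases i <;> simp [*])
    (by simp [Fin.sum_univ_four]) (fun i _ => by fin_cases i <;> simpa)
  simpa [Fin.sum_univ_four] using h

lemma one_sub_smul_add_smul_mem (hV : Convex ℝ V) (hV0 : (0 : Y) ∈ V) {y a b : Y}
    {ε ρ σ t : ℝ} (hε : ε ≤ 1) (hσ : 0 < σ) (hσy : σ • (-y) ∈ V) (ht : 0 ≤ t)
    (hρ0 : 0 ≤ ρ) (hρ1 : ρ ≤ 1) (hρε : ρ * (t + σ⁻¹) ≤ ε)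
    (ha : a ∈ (fun v => y + v) '' ((1 - ε) • V)) (hb : b ∈ t • V) :
    (1 - ρ) • a + ρ • b ∈ (fun v => y + v) '' V := by
  obtain ⟨_, ⟨v, hv, rfl⟩, rfl⟩ := ha
  obtain ⟨w, hw, rfl⟩ := hb
  refine ⟨((1 - ρ) * (1 - ε)) • v + (ρ * t) • w + (ρ * σ⁻¹) • (σ • (-y)),
    hV.smul_add_smul_add_smul_mem hV0 hv hw hσy (by nlinarith) (by positivity) (by positivity)
      (by nlinarith), ?_⟩
  simp only [smul_add, smul_smul, smul_neg, inv_mul_cancel_right₀ hσ.ne']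
  match_scalars <;> ring

end Convexity

section Blocks

variable {d : ℕ} {Y : Type*} [AddCommGroup Y] [Module ℝ Y] {V : Set Y}

lemma mAvg_mem_of_blocks {ι : Type*} {J : Finset ι} {B : ι → Finset (ZLat d)}
    {Λ : Finset (ZLat d)} (hB : (J : Set ι).PairwiseDisjoint B) (hUΛ : J.biUnion B ⊆ Λ)
    (hU : (J.biUnion B).Nonempty) (hV : Convex ℝ V) (hV0 : (0 : Y) ∈ V) {y : Y}
    {ε σ t : ℝ} (hε : ε ≤ 1) (hσ : 0 < σ) (hσy : σ • (-y) ∈ V) (ht : 0 ≤ t)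
    (hρε : ((Λ \ J.biUnion B).card / Λ.card : ℝ) * (t + σ⁻¹) ≤ ε) {ξ : Cfg d Y}
    (hblocks : ∀ j ∈ J, mAvg (B j) ξ ∈ (fun v => y + v) '' ((1 - ε) • V))
    (hrest : ∀ z ∈ Λ \ J.biUnion B, ξ z ∈ t • V) :
    mAvg Λ ξ ∈ (fun v => y + v) '' V := by
  set U := J.biUnion B
  have hΛ : (0 : ℝ) < Λ.card := by exact_mod_cast (hU.mono hUΛ).card_pos
  have hsplit : (U.card : ℝ) / Λ.card = 1 - ((Λ \ U).card : ℝ) / Λ.card := by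
    rw [Finset.card_sdiff_of_subset hUΛ, Nat.cast_sub (Finset.card_le_card hUΛ)]
    field_simp
    ring
  have hrest_mean : mAvg (Λ \ U) ξ ∈ t • V := by
    rcases (Λ \ U).eq_empty_or_nonempty with h | h
    · simpa [h, mAvg] using Set.zero_mem_smul_set hV0
    · exact mAvg_mem_of_forall_mem h (hV.smul t) hrest
  rw [mAvg_eq_add_mAvg_sdiff hUΛ ξ, hsplit]
  refine one_sub_smul_add_smul_mem hV hV0 hε hσ hσy ht (by positivity) ?_ hρε
    (mAvg_biUnion_mem hB hU ((hV.smul _).translate y) hblocks) hrest_mean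
  exact div_le_one_of_le₀ (by exact_mod_cast Finset.card_le_card Finset.sdiff_subset) hΛ.le

end Blocks

section Cylinder

variable {d : ℕ} {Y : Type*} [TopologicalSpace Y] [AddCommGroup Y] [Module ℝ Y]

def IsOpenConvexCylinder (S : Finset (ZLat d)) (E : Set (Cfg d Y)) : Prop :=
  ∃ D : Set (↥S → Y), IsOpen D ∧ Convex ℝ D ∧ E = {ξ | (fun w : ↥S => ξ w.1) ∈ D}

namespace IsOpenConvexCylinder

variable {S T : Finset (ZLat d)} {E F : Set (Cfg d Y)}

lemma univ (S : Finset (ZLat d)) : IsOpenConvexCylinder S (Set.univ : Set (Cfg d Y)) :=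
  ⟨Set.univ, isOpen_univ, convex_univ, by simp⟩

lemma mono (hST : S ⊆ T) (hE : IsOpenConvexCylinder S E) : IsOpenConvexCylinder T E := by
  obtain ⟨D, hDo, hDc, rfl⟩ := hE
  exact ⟨Finset.restrict₂ (π := fun _ => Y) hST ⁻¹' D,
    hDo.preimage (Finset.continuous_restrict₂ hST),
    hDc.is_linear_preimage ⟨fun _ _ => rfl, fun _ _ => rfl⟩, rfl⟩

lemma inter (hE : IsOpenConvexCylinder S E) (hF : IsOpenConvexCylinder S F) :
    IsOpenConvexCylinder S (E ∩ F) := by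
  obtain ⟨D, hDo, hDc, rfl⟩ := hE
  obtain ⟨D', hD'o, hD'c, rfl⟩ := hF
  exact ⟨D ∩ D', hDo.inter hD'o, hDc.inter hD'c, rfl⟩

lemma biInter {ι : Type*} (J : Finset ι) {E : ι → Set (Cfg d Y)}
    (hE : ∀ i ∈ J, IsOpenConvexCylinder S (E i)) : IsOpenConvexCylinder S (⋂ i ∈ J, E i) := by
  classical
  induction J using Finset.induction_on with
  | empty => simpa using univ S
  | insert i J _ ih =>
    rw [Finset.set_biInter_insert]
    exact (hE i (J.mem_insert_self i)).inter (ih fun j hj => hE j (Finset.mem_insert_of_mem hj))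

lemma setOf_forall_mem (R : Finset (ZLat d)) {U : Set Y} (hUo : IsOpen U) (hUc : Convex ℝ U) :
    IsOpenConvexCylinder R {ξ : Cfg d Y | ∀ z ∈ R, ξ z ∈ U} :=
  ⟨Set.univ.pi fun _ => U, isOpen_set_pi Set.finite_univ fun _ _ => hUo,
    convex_pi fun _ _ => hUc, by ext; simp⟩

lemma setOf_mAvg_mem [ContinuousAdd Y] [ContinuousConstSMul ℝ Y] (Λ : Finset (ZLat d))
    {C : Set Y} (hCo : IsOpen C) (hCc : Convex ℝ C) :
    IsOpenConvexCylinder Λ {ξ : Cfg d Y | mAvg Λ ξ ∈ C} := by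
  refine ⟨{f | (Λ.card : ℝ)⁻¹ • ∑ w, f w ∈ C},
    hCo.preimage ((continuous_finsetSum _ fun w _ => continuous_apply w).const_smul _),
    hCc.is_linear_preimage ⟨fun f f' => ?_, fun r f => ?_⟩, ?_⟩
  · simp only [Pi.add_apply, Finset.sum_add_distrib, smul_add]
  · simp only [Pi.smul_apply, ← Finset.smul_sum, smul_comm r]
  · ext ξ
    simp [mAvg, Finset.sum_attach]

end IsOpenConvexCylinder

end Cylinder

section Hypotheses

variable {d : ℕ} {Y : Type*} [TopologicalSpace Y] [AddCommGroup Y] [Module ℝ Y]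
  [MeasurableSpace Y] {μ : Measure (Cfg d Y)}

lemma IsCadi.le_measure_inter {g c : ℕ → ℝ} (h : IsCadi μ g c) {z : ZLat d} {n : ℕ} (hn : 0 < n)
    {S : Finset (ZLat d)} (hsep : ∀ x ∈ S, ∀ w ∈ box d z n, g n < supdist x w)
    {E F : Set (Cfg d Y)} (hE : IsOpenConvexCylinder (box d z n) E)
    (hF : IsOpenConvexCylinder S F) :
    ENNReal.ofReal (Real.exp (-(c n))) * μ E * μ F ≤ μ (E ∩ F) := by
  obtain ⟨C, hCo, hCc, rfl⟩ := hE
  obtain ⟨D, hDo, hDc, rfl⟩ := hF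
  exact h z n hn S hsep C hCo hCc D hDo hDc

lemma IsCadi.le_measure_biInter [IsProbabilityMeasure μ] {g c : ℕ → ℝ} (h : IsCadi μ g c)
    {m : ℕ} (hm : 0 < m) {ι : Type*} (J : Finset ι) (a : ι → ZLat d) {E : ι → Set (Cfg d Y)}
    (hE : ∀ i ∈ J, IsOpenConvexCylinder (box d (a i) m) (E i))
    (hsep : ∀ i ∈ J, ∀ i' ∈ J, i ≠ i' →
      ∀ x ∈ box d (a i) m, ∀ w ∈ box d (a i') m, g m < supdist x w) :
    ENNReal.ofReal (Real.exp (-(c m))) ^ J.card * ∏ i ∈ J, μ (E i) ≤ μ (⋂ i ∈ J, E i) := by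
  classical
  induction J using Finset.induction_on with
  | empty => simp
  | insert i J hi ih =>
    have hF : IsOpenConvexCylinder (J.biUnion fun j => box d (a j) m) (⋂ j ∈ J, E j) :=
      .biInter J fun j hj =>
        (hE j (Finset.mem_insert_of_mem hj)).mono (Finset.subset_biUnion_of_mem _ hj)
    have hsepF : ∀ x ∈ J.biUnion fun j => box d (a j) m, ∀ w ∈ box d (a i) m,
        g m < supdist x w := by
      intro x hx w hw
      obtain ⟨j, hj, hxj⟩ := Finset.mem_biUnion.1 hx
      exact hsep j (Finset.mem_insert_of_mem hj) i (J.mem_insert_self i)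
        (fun hji => hi (hji ▸ hj)) x hxj w hw
    calc ENNReal.ofReal (Real.exp (-(c m))) ^ (insert i J).card * ∏ j ∈ insert i J, μ (E j)
        = ENNReal.ofReal (Real.exp (-(c m))) * μ (E i)
            * (ENNReal.ofReal (Real.exp (-(c m))) ^ J.card * ∏ j ∈ J, μ (E j)) := by
          rw [Finset.card_insert_of_notMem hi, Finset.prod_insert hi, pow_succ]
          ring
      _ ≤ ENNReal.ofReal (Real.exp (-(c m))) * μ (E i) * μ (⋂ j ∈ J, E j) := by
          gcongr
          exact ih (fun j hj => hE j (Finset.mem_insert_of_mem hj)) fun j hj j' hj' =>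
            hsep j (Finset.mem_insert_of_mem hj) j' (Finset.mem_insert_of_mem hj')
      _ ≤ μ (⋂ j ∈ insert i J, E j) := by
          rw [Finset.set_biInter_insert]
          exact h.le_measure_inter hm hsepF (hE i (J.mem_insert_self i)) hF

variable {t α : Set Y → ℝ} {V : Set Y}

lemma IsCl.le_measure_inter (h : IsCl μ t α) (hVo : IsOpen V) (hVc : Convex ℝ V)
    (hV0 : (0 : Y) ∈ V) {z : ZLat d} {S : Finset (ZLat d)} (hz : z ∉ S) {E : Set (Cfg d Y)}
    (hE : IsOpenConvexCylinder S E) :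
    ENNReal.ofReal (α V) * μ E ≤ μ ({ξ | ξ z ∈ t V • V} ∩ E) := by
  obtain ⟨D, hDo, hDc, rfl⟩ := hE
  exact h V hVo hVc hV0 z S hz D hDo hDc

lemma IsCl.le_measure_forall_mem_inter [ContinuousConstSMul ℝ Y] (h : IsCl μ t α)
    (hVo : IsOpen V) (hVc : Convex ℝ V) (hV0 : (0 : Y) ∈ V) (ht : t V ≠ 0)
    {S : Finset (ZLat d)} {E : Set (Cfg d Y)} (hE : IsOpenConvexCylinder S E)
    (R : Finset (ZLat d)) (hRS : Disjoint R S) :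
    ENNReal.ofReal (α V) ^ R.card * μ E ≤ μ ({ξ | ∀ z ∈ R, ξ z ∈ t V • V} ∩ E) := by
  classical
  induction R using Finset.induction_on with
  | empty => simp
  | insert z R hz ih =>
    rw [Finset.disjoint_insert_left] at hRS
    have hF : IsOpenConvexCylinder (R ∪ S) ({ξ | ∀ z ∈ R, ξ z ∈ t V • V} ∩ E) :=
      ((IsOpenConvexCylinder.setOf_forall_mem R (hVo.smul₀ ht) (hVc.smul _)).mono
        Finset.subset_union_left).inter (hE.mono Finset.subset_union_right)
    calc ENNReal.ofReal (α V) ^ (insert z R).card * μ E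
        = ENNReal.ofReal (α V) * (ENNReal.ofReal (α V) ^ R.card * μ E) := by
          rw [Finset.card_insert_of_notMem hz, pow_succ', mul_assoc]
      _ ≤ ENNReal.ofReal (α V) * μ ({ξ | ∀ z ∈ R, ξ z ∈ t V • V} ∩ E) := by
          gcongr
          exact ih hRS.2
      _ ≤ μ ({ξ | ξ z ∈ t V • V} ∩ ({ξ | ∀ z ∈ R, ξ z ∈ t V • V} ∩ E)) :=
          h.le_measure_inter hVo hVc hV0 (by simp [hz, hRS.1]) hF
      _ = μ ({ξ | ∀ z' ∈ insert z R, ξ z' ∈ t V • V} ∩ E) := by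
          simp only [Finset.forall_mem_insert, ← Set.inter_assoc, Set.ofPred_and]

end Hypotheses

section Invariance

variable {d : ℕ} {Y : Type*} [MeasurableSpace Y] {μ : Measure (Cfg d Y)} {ℓ : ℕ}

lemma IsRlInv.measure_preimage_shift (h : IsRlInv μ ℓ) {a : ZLat d}
    (ha : ∀ k, (ℓ : ℤ) ∣ a k) (E : Set (Cfg d Y)) :
    μ ((fun ξ : Cfg d Y => fun z => ξ (z + a)) ⁻¹' E) = μ E := by
  have hle : ∀ b : ZLat d, (∀ k, (ℓ : ℤ) ∣ b k) → ∀ E : Set (Cfg d Y),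
      μ ((fun ξ : Cfg d Y => fun z => ξ (z + b)) ⁻¹' E) ≤ μ E := fun b hb E =>
    (Measure.le_map_apply (measurable_pi_lambda _ fun z => measurable_pi_apply _).aemeasurable
      E).trans_eq (by rw [h b hb])
  refine le_antisymm (hle a ha E) ?_
  calc μ E = μ ((fun ξ : Cfg d Y => fun z => ξ (z + -a)) ⁻¹'
        ((fun ξ : Cfg d Y => fun z => ξ (z + a)) ⁻¹' E)) := by
          simp only [Set.preimage_preimage, add_neg_cancel_right, Set.preimage_id']
    _ ≤ _ := hle (-a) (fun k => (ha k).neg_right) _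

lemma IsRlInv.measure_mAvg_box_mem [AddCommGroup Y] [Module ℝ Y] (h : IsRlInv μ ℓ) {a : ZLat d}
    (ha : ∀ k, (ℓ : ℤ) ∣ a k) (m : ℕ) (C : Set Y) :
    μ {ξ | mAvg (box d a m) ξ ∈ C} = μ {ξ | mAvg (box d 0 m) ξ ∈ C} := by
  rw [← h.measure_preimage_shift ha {ξ | mAvg (box d 0 m) ξ ∈ C}]
  congr 1
  ext ξ
  simp [mAvg, box_eq_map_addRight a m]

end Invariance

section Grid

variable {d k : ℕ}

/-- The corner `L • j` rounded down to `(ℓℤ)^d`, so that `R_ℓ`-invariance carries `Λ(m)` onto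
every block of the grid. -/
def gridPt (ℓ L : ℕ) (j : Fin d → Fin k) : ZLat d :=
  fun i => ((ℓ * (L * j i / ℓ) : ℕ) : ℤ)

lemma gridPt_dvd (ℓ L : ℕ) (j : Fin d → Fin k) (i : Fin d) : (ℓ : ℤ) ∣ gridPt ℓ L j i :=
  Int.natCast_dvd_natCast.2 (Dvd.intro _ rfl)

lemma box_gridPt_subset {ℓ L m n : ℕ} (hmL : m ≤ L) (hkL : k * L ≤ n) (j : Fin d → Fin k) :
    box d (gridPt ℓ L j) m ⊆ box d 0 n := by
  intro x hx
  rw [mem_box] at hx ⊢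
  intro i
  have hround : ℓ * (L * j i / ℓ) ≤ L * j i := Nat.mul_div_le _ _
  have hcorner : L * j i + L ≤ k * L := by
    rw [mul_comm k]; exact (Nat.mul_succ L _).symm.le.trans (Nat.mul_le_mul_left L (j i).2)
  have := hx i
  simp only [gridPt, Pi.zero_apply, zero_add] at this ⊢
  omega

lemma lt_supdist_of_mem_box_gridPt {ℓ L m G : ℕ} (hℓ : 0 < ℓ) (hL : m + G + ℓ ≤ L)
    {j j' : Fin d → Fin k} (hjj' : j ≠ j') {x w : ZLat d} (hx : x ∈ box d (gridPt ℓ L j) m)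
    (hw : w ∈ box d (gridPt ℓ L j') m) : (G : ℝ) < supdist x w := by
  obtain ⟨i, hi⟩ := Function.ne_iff.1 hjj'
  have hround : ∀ p : ℕ, ℓ * (L * p / ℓ) ≤ L * p ∧ L * p < ℓ * (L * p / ℓ) + ℓ := fun p =>
    ⟨Nat.mul_div_le _ _, by have := Nat.div_add_mod (L * p) ℓ; have := Nat.mod_lt (L * p) hℓ; omega⟩
  have hfar : ∀ p p' : ℕ, p < p' → L * p + L ≤ L * p' := fun p p' h =>
    (Nat.mul_succ L p).symm.le.trans (Nat.mul_le_mul_left L h)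
  rw [mem_box] at hx hw
  have hxi := hx i
  have hwi := hw i
  have hj := hround (j i)
  have hj' := hround (j' i)
  simp only [gridPt] at hxi hwi
  have hsep : (G : ℤ) < (x i - w i).natAbs := by
    rcases lt_or_gt_of_ne (Fin.val_injective.ne hi) with h | h
    · have := hfar _ _ h; omega
    · have := hfar _ _ h; omega
  exact lt_of_lt_of_le (by exact_mod_cast hsep) (natAbs_sub_le_supdist x w i)

lemma pairwiseDisjoint_box_gridPt {ℓ L m : ℕ} (hℓ : 0 < ℓ) (hL : m + ℓ ≤ L) :
    ((Finset.univ : Finset (Fin d → Fin k)) : Set (Fin d → Fin k)).PairwiseDisjoint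
      fun j => box d (gridPt ℓ L j) m := by
  intro j _ j' _ hjj'
  refine Finset.disjoint_left.2 fun {x} hx hx' => ?_
  have := lt_supdist_of_mem_box_gridPt (G := 0) hℓ (by omega) hjj' hx hx'
  simp [supdist] at this

end Grid

section Superadditivity

variable {d : ℕ} {Y : Type*} [TopologicalSpace Y] [AddCommGroup Y] [Module ℝ Y]
  [IsTopologicalAddGroup Y] [ContinuousSMul ℝ Y] [MeasurableSpace Y]

theorem le_measure_mAvg_box_mem {μ : Measure (Cfg d Y)} [IsProbabilityMeasure μ]
    {g c : ℕ → ℝ} (hcadi : IsCadi μ g c) {t α : Set Y → ℝ} (hcl : IsCl μ t α)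
    {ℓ : ℕ} (hℓ : 0 < ℓ) (hinv : IsRlInv μ ℓ)
    {V : Set Y} (hVo : IsOpen V) (hVc : Convex ℝ V) (hV0 : (0 : Y) ∈ V) (ht : 0 < t V)
    {y : Y} {ε σ : ℝ} (hε : ε < 1) (hσ : 0 < σ) (hσy : σ • (-y) ∈ V)
    {m k L n : ℕ} (hm : 0 < m) (hk : 0 < k) (hL : m + ⌈g m⌉₊ + ℓ ≤ L) (hkL : k * L ≤ n)
    (hρε : ((n ^ d - k ^ d * m ^ d : ℕ) / (n : ℝ) ^ d) * (t V + σ⁻¹) ≤ ε) :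
    ENNReal.ofReal (α V) ^ (n ^ d - k ^ d * m ^ d)
        * (ENNReal.ofReal (Real.exp (-(c m))) ^ k ^ d
          * μ {ξ | mAvg (box d 0 m) ξ ∈ (fun v => y + v) '' ((1 - ε) • V)} ^ k ^ d)
      ≤ μ {ξ | mAvg (box d 0 n) ξ ∈ (fun v => y + v) '' V} := by
  set C := (fun v => y + v) '' ((1 - ε) • V)
  have hCo : IsOpen C := (Homeomorph.addLeft y).isOpenMap _ (hVo.smul₀ (by linarith))
  have hCc : Convex ℝ C := (hVc.smul _).translate y
  set J := (Finset.univ : Finset (Fin d → Fin k))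
  set B := fun j : Fin d → Fin k => box d (gridPt ℓ L j) m
  have hB := pairwiseDisjoint_box_gridPt (d := d) (k := k) (m := m) hℓ (by omega : m + ℓ ≤ L)
  have hsep : ∀ j ∈ J, ∀ j' ∈ J, j ≠ j' → ∀ x ∈ B j, ∀ w ∈ B j', g m < supdist x w :=
    fun _ _ _ _ hjj' _ hx _ hw =>
      (Nat.le_ceil (g m)).trans_lt (lt_supdist_of_mem_box_gridPt hℓ hL hjj' hx hw)
  have hUΛ : J.biUnion B ⊆ box d 0 n :=
    Finset.biUnion_subset.2 fun j _ => box_gridPt_subset (by omega) hkL j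
  have hUcard : (J.biUnion B).card = k ^ d * m ^ d := by
    simp [Finset.card_biUnion hB, B, J, card_box]
  have hRcard : (box d 0 n \ J.biUnion B).card = n ^ d - k ^ d * m ^ d := by
    rw [Finset.card_sdiff_of_subset hUΛ, card_box, hUcard]
  have hblocks : ENNReal.ofReal (Real.exp (-(c m))) ^ k ^ d * μ {ξ | mAvg (box d 0 m) ξ ∈ C} ^ k ^ d
      ≤ μ (⋂ j ∈ J, {ξ | mAvg (B j) ξ ∈ C}) := by
    have := hcadi.le_measure_biInter hm J (gridPt ℓ L)
      (fun j _ => IsOpenConvexCylinder.setOf_mAvg_mem (B j) hCo hCc) hsep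
    simpa [J, B, hinv.measure_mAvg_box_mem (gridPt_dvd ℓ L _)] using this
  have hrest := hcl.le_measure_forall_mem_inter hVo hVc hV0 ht.ne'
    (.biInter J fun j hj => (IsOpenConvexCylinder.setOf_mAvg_mem (B j) hCo hCc).mono
      (Finset.subset_biUnion_of_mem B hj))
    (box d 0 n \ J.biUnion B) Finset.sdiff_disjoint
  have hincl : {ξ | ∀ z ∈ box d 0 n \ J.biUnion B, ξ z ∈ t V • V}
        ∩ ⋂ j ∈ J, {ξ | mAvg (B j) ξ ∈ C}
      ⊆ {ξ | mAvg (box d 0 n) ξ ∈ (fun v => y + v) '' V} := by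
    rintro ξ ⟨hξR, hξU⟩
    simp only [Set.mem_iInter] at hξU
    refine mAvg_mem_of_blocks hB hUΛ ?_ hVc hV0 hε.le hσ hσy ht.le ?_ hξU hξR
    · exact Finset.card_pos.1 (by rw [hUcard]; positivity)
    · rwa [hRcard, card_box, Nat.cast_pow]
  rw [← hRcard]
  calc _ ≤ ENNReal.ofReal (α V) ^ (box d 0 n \ J.biUnion B).card
        * μ (⋂ j ∈ J, {ξ | mAvg (B j) ξ ∈ C}) := by gcongr
    _ ≤ _ := hrest.trans (measure_mono hincl)

end Superadditivity

variable {Y : Type*} [AddCommGroup Y] [Module ℝ Y] [UniformSpace Y] [IsUniformAddGroup Y]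
  [ContinuousSMul ℝ Y] [LocallyConvexSpace ℝ Y] [CompleteSpace Y]
  [TopologicalSpace.SeparableSpace Y] [TopologicalSpace.MetrizableSpace Y]
  [MeasurableSpace Y] [BorelSpace Y]

/-- L(m) = m + ⌈g(m)⌉ + ℓ. -/
def Lspacing (g : ℕ → ℝ) (ℓ m : ℕ) : ℕ := m + ⌈g m⌉₊ + ℓ

/-- k_{m,n} = ⌊n / L(m)⌋. -/
def kmn (g : ℕ → ℝ) (ℓ m n : ℕ) : ℕ := n / Lspacing g ℓ m

/-- ρ_{m,n} = 1 - k_{m,n}^d m^d / n^d. -/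
def rhomn (d : ℕ) (g : ℕ → ℝ) (ℓ m n : ℕ) : ℝ :=
  1 - ((kmn g ℓ m n : ℝ) ^ d * (m : ℝ) ^ d) / (n : ℝ) ^ d

section Spacing

variable {d : ℕ} {g : ℕ → ℝ} {ℓ m n : ℕ}

lemma le_Lspacing : m ≤ Lspacing g ℓ m := by
  unfold Lspacing; omega

lemma kmn_mul_le : kmn g ℓ m n * m ≤ n :=
  (Nat.mul_le_mul_left _ le_Lspacing).trans (Nat.div_mul_le_self n _)

lemma rhomn_eq_card_div (hn : 0 < n) :
    rhomn d g ℓ m n = ((n ^ d - kmn g ℓ m n ^ d * m ^ d : ℕ) : ℝ) / (n : ℝ) ^ d := by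
  rw [rhomn, Nat.cast_sub (by rw [← mul_pow]; exact Nat.pow_le_pow_left kmn_mul_le d)]
  push_cast
  field_simp

lemma rhomn_le (hg : 0 ≤ g m) (hm : 0 < m) (hn : Lspacing g ℓ m ≤ n) :
    rhomn d g ℓ m n ≤ d * ((g m + 1 + ℓ) / m) + d * (Lspacing g ℓ m / n) := by
  set L := Lspacing g ℓ m
  set k := kmn g ℓ m n
  have hmL : (m : ℝ) ≤ L := by exact_mod_cast le_Lspacing
  have hn0 : (0 : ℝ) < n := by exact_mod_cast hm.trans_le (le_Lspacing.trans hn)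
  have hkm : (k : ℝ) * m ≤ n := by exact_mod_cast kmn_mul_le
  have hnL : (n : ℝ) < k * L + L := by exact_mod_cast Nat.lt_div_mul_add (hm.trans_le le_Lspacing)
  have hLm : (L : ℝ) ≤ m + (g m + 1) + ℓ := by
    have := Nat.ceil_lt_add_one hg
    simp only [L, Lspacing]; push_cast; linarith
  set u := (k : ℝ) * m / n
  have hu1 : u ≤ 1 := div_le_one_of_le₀ hkm hn0.le
  have hbernoulli : 1 - u ^ d ≤ d * (1 - u) := by
    have := one_add_mul_le_pow (a := u - 1) (by linarith [show 0 ≤ u by positivity]) d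
    simp only [add_sub_cancel] at this
    linarith
  have hgap : 1 - u ≤ (g m + 1 + ℓ) / m + L / n := by
    have hcross : (m : ℝ) * (n - k * m) ≤ (g m + 1 + ℓ) * n + m * L := by
      nlinarith [mul_le_mul_of_nonneg_right hkm (sub_nonneg.2 hmL),
        mul_lt_mul_of_pos_left hnL (by positivity : (0 : ℝ) < m)]
    calc 1 - u = m * (n - k * m) / (m * n) := by
          rw [mul_div_mul_left _ _ (by positivity), sub_div, div_self hn0.ne']
      _ ≤ ((g m + 1 + ℓ) * n + m * L) / (m * n) := by gcongr
      _ = _ := by field_simp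
  calc rhomn d g ℓ m n = 1 - u ^ d := by rw [rhomn, div_pow, mul_pow]
    _ ≤ d * ((g m + 1 + ℓ) / m + L / n) := hbernoulli.trans (by gcongr)
    _ = _ := mul_add _ _ _

lemma eventually_rhomn_le (hg : ∀ m, 0 ≤ g m)
    (hg_small : Tendsto (fun m : ℕ => g m / m) atTop (𝓝 0)) (d ℓ : ℕ) {s : ℝ} (hs : 0 < s) :
    ∀ᶠ m in atTop, ∀ᶠ n in atTop, rhomn d g ℓ m n ≤ s := by
  have hfirst : Tendsto (fun m : ℕ => d * ((g m + 1 + ℓ) / m)) atTop (𝓝 0) := by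
    have := (hg_small.add (tendsto_const_div_atTop_nhds_zero_nat (1 + ℓ : ℝ))).const_mul (d : ℝ)
    rw [add_zero, mul_zero] at this
    exact this.congr fun m => by ring
  filter_upwards [hfirst.eventually_lt_const (half_pos hs), eventually_gt_atTop 0] with m hm hm0
  have hsecond : Tendsto (fun n : ℕ => (d : ℝ) * (Lspacing g ℓ m / n)) atTop (𝓝 0) := by
    simpa only [mul_zero] using
      (tendsto_const_div_atTop_nhds_zero_nat (Lspacing g ℓ m : ℝ)).const_mul (d : ℝ)
  filter_upwards [hsecond.eventually_lt_const (half_pos hs), eventually_ge_atTop (Lspacing g ℓ m)]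
    with n hn hLn
  linarith [rhomn_le (d := d) (hg m) hm0 hLn]

end Spacing

theorem subadditive_lemma_explicit_general {d : ℕ}
    (μ : Measure (Cfg d Y)) [IsProbabilityMeasure μ]
    (g c : ℕ → ℝ) (hgc : CadiParams d g c) (hcadi : IsCadi μ g c)
    (t α : Set Y → ℝ) (htα : ClParams t α) (hcl : IsCl μ t α)
    (ℓ : ℕ) (hℓ : 0 < ℓ) (hinv : IsRlInv μ ℓ)
    (V : Set Y) (hVo : IsOpen V) (hVc : Convex ℝ V) (hV0 : (0 : Y) ∈ V) (y : Y) :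
    ∀ ε ∈ Set.Ioo (0 : ℝ) 1, ∃ M : ℕ, ∀ m ≥ M, ∃ N : ℕ, ∀ n ≥ N,
      ((((box d 0 m).card : ℝ)⁻¹ : ℝ) : EReal) *
          ENNReal.log (μ {ξ | mAvg (box d 0 m) ξ ∈ (fun v => y + v) '' ((1 - ε) • V)})
          + (((- c m / ((box d 0 m).card : ℝ)
              + rhomn d g ℓ m n * Real.log (α V)) : ℝ) : EReal)
        ≤ ((((box d 0 n).card : ℝ)⁻¹ : ℝ) : EReal) *
            ENNReal.log (μ {ξ | mAvg (box d 0 n) ξ ∈ (fun v => y + v) '' V}) := by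
  rintro ε ⟨hε0, hε1⟩
  have ht : 0 < t V := htα.t_pos V hVo hVc hV0
  obtain ⟨σ, hσ, hσy⟩ := exists_pos_smul_mem_of_mem_nhds (hVo.mem_nhds hV0) (-y)
  obtain ⟨M, hM⟩ := eventually_atTop.1 ((eventually_rhomn_le hgc.g_nonneg hgc.g_small d ℓ
    (by positivity : 0 < ε / (t V + σ⁻¹))).and (eventually_gt_atTop 0))
  refine ⟨M, fun m hm => ?_⟩
  obtain ⟨hρ, hm0⟩ := hM m hm
  obtain ⟨N, hN⟩ := eventually_atTop.1 (hρ.and (eventually_ge_atTop (Lspacing g ℓ m)))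
  refine ⟨N, fun n hn => ?_⟩
  obtain ⟨hρn, hLn⟩ := hN n hn
  have hn0 : 0 < n := hm0.trans_le (le_Lspacing.trans hLn)
  rw [rhomn_eq_card_div hn0, le_div_iff₀ (by positivity)] at hρn
  rw [rhomn_eq_card_div hn0]
  simp only [card_box, Nat.cast_pow]
  refine inv_mul_log_add_le prob_le_one (by positivity) (by positivity) ?_ (hgc.c_nonneg m)
    (htα.α_pos V hVo hVc hV0) (le_measure_mAvg_box_mem hcadi hcl hℓ hinv hVo hVc hV0 ht hε1 hσ hσy
      hm0 (Nat.div_pos hLn (hm0.trans_le le_Lspacing)) le_rfl (Nat.div_mul_le_self n _) hρn)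
  rw [← Nat.cast_pow, ← Nat.cast_pow, ← Nat.cast_mul, ← mul_pow, Nat.cast_le]
  exact Nat.pow_le_pow_left kmn_mul_le d

/-- subadditive lemma, explicit version: with C = y + V and
C(y,ε) = y + (1-ε)V, for every ε ∈ (0,1) there is M(ε) such that for all m ≥ M there is
N(m,ε) such that for n ≥ N,
|Λ(n)|⁻¹ log P(m_{Λ(n)} η ∈ C)
  ≥ |Λ(m)|⁻¹ log P(m_{Λ(m)} η ∈ C(y,ε)) - c(m)/|Λ(m)| + ρ_{m,n} log α(V). -/
theorem subadditive_lemma_explicit {d : ℕ} (hd : 0 < d)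
    (μ : Measure (Cfg d Y)) [IsProbabilityMeasure μ]
    (g c : ℕ → ℝ) (hgc : CadiParams d g c) (hcadi : IsCadi μ g c)
    (t α : Set Y → ℝ) (htα : ClParams t α) (hcl : IsCl μ t α)
    (ℓ : ℕ) (hℓ : 0 < ℓ) (hinv : IsRlInv μ ℓ)
    (V : Set Y) (hVo : IsOpen V) (hVc : Convex ℝ V) (hV0 : (0 : Y) ∈ V) (y : Y) :
    ∀ ε ∈ Set.Ioo (0 : ℝ) 1, ∃ M : ℕ, ∀ m ≥ M, ∃ N : ℕ, ∀ n ≥ N,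
      ((((box d 0 m).card : ℝ)⁻¹ : ℝ) : EReal) *
          ENNReal.log (μ {ξ | mAvg (box d 0 m) ξ ∈ (fun v => y + v) '' ((1 - ε) • V)})
          + (((- c m / ((box d 0 m).card : ℝ)
              + rhomn d g ℓ m n * Real.log (α V)) : ℝ) : EReal)
        ≤ ((((box d 0 n).card : ℝ)⁻¹ : ℝ) : EReal) *
            ENNReal.log (μ {ξ | mAvg (box d 0 n) ξ ∈ (fun v => y + v) '' V}) :=
  subadditive_lemma_explicit_general μ g c hgc hcadi t α htα hcl ℓ hℓ hinv V hVo hVc hV0 y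
end
end

section
/- Let η = (η(z))_{z∈ℤ^d} be a real-valued field (Y = ℝ) that is c.l. with parameter (t,α). Then there exists β > 0 such that for every finite set Λ ⊆ ℤ^d \ {0}, E[e^{η(0)} | η_Λ] ≥ β almost surely. (One may take β = e^{−t(V_1)} α(V_1) with V_1 = (−1,1).) -/
open MeasureTheory Filter Topology Pointwise

noncomputable section

section Aux

open Metric
open scoped ENNReal

private lemma aux_measure_le_of_convex_open
    {X : Type*} [NormedAddCommGroup X] [NormedSpace ℝ X] [FiniteDimensional ℝ X]
    [MeasurableSpace X] [BorelSpace X] [SecondCountableTopology X]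
    (ρ m : Measure X) [IsFiniteMeasure ρ] [IsFiniteMeasure m]
    (c : ℝ≥0∞) (hc : c ≠ ⊤)
    (h : ∀ D : Set X, IsOpen D → Convex ℝ D → c * m D ≤ ρ D)
    {B : Set X} (hB : MeasurableSet B) : c * m B ≤ ρ B := by
  -- step 1: the inequality on closed balls
  have hclosed : ∀ (x : X) (r : ℝ), c * m (closedBall x r) ≤ ρ (closedBall x r) := by
    intro x r
    set s : ℕ → Set X := fun n => ball x (r + ((n : ℝ) + 1)⁻¹) with hs
    have hmono : Antitone s := by
      intro i j hij
      apply ball_subset_ball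
      have : ((j : ℝ) + 1)⁻¹ ≤ ((i : ℝ) + 1)⁻¹ := by
        apply inv_anti₀ (by positivity)
        exact_mod_cast by omega
      linarith
    have hiInter : ⋂ n, s n = closedBall x r := by
      ext y
      simp only [Set.mem_iInter, mem_ball, mem_closedBall, hs]
      constructor
      · intro hy
        have hlim : Filter.Tendsto (fun n : ℕ => r + ((n : ℝ) + 1)⁻¹) atTop (𝓝 (r + 0)) := by
          apply Filter.Tendsto.const_add
          exact tendsto_one_div_add_atTop_nhds_zero_nat.congr (by
            intro n; rw [one_div])
        rw [add_zero] at hlim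
        exact ge_of_tendsto' hlim fun n => (hy n).le
      · intro hy n
        have : (0 : ℝ) < ((n : ℝ) + 1)⁻¹ := by positivity
        linarith
    have hmeas : ∀ n, NullMeasurableSet (s n) m := fun n =>
      (isOpen_ball.measurableSet).nullMeasurableSet
    have hmeasρ : ∀ n, NullMeasurableSet (s n) ρ := fun n =>
      (isOpen_ball.measurableSet).nullMeasurableSet
    have h1 : Filter.Tendsto (fun n => m (s n)) atTop (𝓝 (m (closedBall x r))) := by
      rw [← hiInter]
      exact tendsto_measure_iInter_atTop hmeas hmono ⟨0, measure_ne_top _ _⟩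
    have h2 : Filter.Tendsto (fun n => ρ (s n)) atTop (𝓝 (ρ (closedBall x r))) := by
      rw [← hiInter]
      exact tendsto_measure_iInter_atTop hmeasρ hmono ⟨0, measure_ne_top _ _⟩
    have h3 : Filter.Tendsto (fun n => c * m (s n)) atTop (𝓝 (c * m (closedBall x r))) :=
      ENNReal.Tendsto.const_mul h1 (Or.inr hc)
    exact le_of_tendsto_of_tendsto' h3 h2 fun n => h _ isOpen_ball (convex_ball _ _)
  -- step 2: set of points with a null closed ball is null
  set N : Set X := {x : X | ∃ r > 0, m (closedBall x r) = 0} with hNdef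
  have hN : m N = 0 := by
    apply measure_null_of_locally_null
    intro x hx
    obtain ⟨r, hr, hr0⟩ := hx
    refine ⟨ball x r ∩ N, ?_, ?_⟩
    · exact Filter.inter_mem (mem_nhdsWithin_of_mem_nhds (ball_mem_nhds x hr)) self_mem_nhdsWithin
    · exact measure_mono_null (fun y hy => (ball_subset_closedBall hy.1)) hr0
  -- step 3: rnDeriv lower bound a.e.
  have key : ∀ᵐ x ∂m, c ≤ ρ.rnDeriv m x := by
    filter_upwards [Besicovitch.ae_tendsto_rnDeriv ρ m, measure_eq_zero_iff_ae_notMem.mp hN]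
      with x hx hxN
    apply ge_of_tendsto hx
    filter_upwards [self_mem_nhdsWithin] with r hr
    have hm0 : m (closedBall x r) ≠ 0 := fun h0 => hxN ⟨r, hr, h0⟩
    rw [ENNReal.le_div_iff_mul_le (Or.inl hm0) (Or.inl (measure_ne_top _ _))]
    exact hclosed x r
  -- step 4: conclude
  calc c * m B = ∫⁻ _ in B, c ∂m := (setLIntegral_const B c).symm
    _ ≤ ∫⁻ x in B, ρ.rnDeriv m x ∂m := lintegral_mono_ae (ae_restrict_of_ae key)
    _ = m.withDensity (ρ.rnDeriv m) B := (withDensity_apply _ hB).symm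
    _ ≤ ρ B := Measure.withDensity_rnDeriv_le ρ m B

end Aux


/-- for a real-valued field η that is c.l. with parameter (t,α), there
exists β > 0 (namely β = e^{-t(V₁)} α(V₁) with V₁ = (-1,1)) such that for every finite
Λ ⊆ ℤ^d \ {0}, E[e^{η(0)} | η_Λ] ≥ β almost surely; equivalently, for every set S
measurable with respect to the σ-algebra generated by η_Λ,
E[e^{η(0)} 1_S] ≥ β P(S). -/
theorem condexp_exp_lower_bound {d : ℕ} (hd : 0 < d)
    (μ : Measure (Cfg d ℝ)) [IsProbabilityMeasure μ]
    (t α : Set ℝ → ℝ) (htα : ClParams t α) (hcl : IsCl μ t α) :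
    ∃ β : ℝ,
      β = Real.exp (-(t (Set.Ioo (-1 : ℝ) 1))) * α (Set.Ioo (-1 : ℝ) 1) ∧ 0 < β ∧
      ∀ Λ : Finset (ZLat d), (0 : ZLat d) ∉ Λ →
        ∀ S : Set (Cfg d ℝ),
          MeasurableSet[MeasurableSpace.comap
            (fun ξ : Cfg d ℝ => fun w : ↥Λ => ξ w.1) inferInstance] S →
          ENNReal.ofReal β * μ S ≤ ∫⁻ ξ in S, ENNReal.ofReal (Real.exp (ξ 0)) ∂μ := by
  set V : Set ℝ := Set.Ioo (-1 : ℝ) 1 with hV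
  have hVo : IsOpen V := isOpen_Ioo
  have hVc : Convex ℝ V := convex_Ioo _ _
  have hV0 : (0 : ℝ) ∈ V := by constructor <;> norm_num
  have htpos : 0 < t V := htα.t_pos V hVo hVc hV0
  have hapos : 0 < α V := htα.α_pos V hVo hVc hV0
  refine ⟨_, rfl, by positivity, ?_⟩
  intro Λ hΛ S hS
  obtain ⟨B, hB, rfl⟩ := hS
  set π : Cfg d ℝ → (↥Λ → ℝ) := fun ξ => fun w : ↥Λ => ξ w.1 with hπdef
  have hπ : Measurable π := measurable_pi_lambda _ fun w => measurable_pi_apply w.1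
  set A : Set (Cfg d ℝ) := {ξ : Cfg d ℝ | ξ 0 ∈ t V • V} with hAdef
  have htsmul : IsOpen (t V • V) := hVo.smul₀ (ne_of_gt htpos)
  have hA : MeasurableSet A := (measurable_pi_apply 0) htsmul.measurableSet
  have hexp : ∀ ξ ∈ A, Real.exp (-(t V)) ≤ Real.exp (ξ 0) := by
    intro ξ hξ
    obtain ⟨y, hy, hyx⟩ := hξ
    apply Real.exp_le_exp.2
    have : t V * (-1) < t V * y := by
      apply mul_lt_mul_of_pos_left _ htpos
      exact hy.1
    simp only [smul_eq_mul] at hyx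
    rw [← hyx]
    nlinarith
  set m : Measure (↥Λ → ℝ) := μ.map π with hmdef
  set ρ : Measure (↥Λ → ℝ) := (μ.restrict A).map π with hρdef
  have hle : ∀ D : Set (↥Λ → ℝ), IsOpen D → Convex ℝ D →
      ENNReal.ofReal (α V) * m D ≤ ρ D := by
    intro D hD hDc
    have h0 := hcl V hVo hVc hV0 0 Λ hΛ D hD hDc
    rw [hmdef, hρdef, Measure.map_apply hπ hD.measurableSet,
      Measure.map_apply hπ hD.measurableSet, Measure.restrict_apply (hπ hD.measurableSet)]
    have hset : π ⁻¹' D ∩ A = {ξ | ξ 0 ∈ (t V • V : Set ℝ) ∧ (fun w : ↥Λ => ξ w.1) ∈ D} := by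
      ext ξ; exact and_comm
    rw [hset]
    exact h0
  have key : ENNReal.ofReal (α V) * m B ≤ ρ B :=
    aux_measure_le_of_convex_open ρ m (ENNReal.ofReal (α V)) ENNReal.ofReal_ne_top hle hB
  have hmB : m B = μ (π ⁻¹' B) := Measure.map_apply hπ hB
  have hρB : ρ B = μ (π ⁻¹' B ∩ A) := by
    rw [hρdef, Measure.map_apply hπ hB, Measure.restrict_apply (hπ hB)]
  have hmint : Measurable fun ξ : Cfg d ℝ => ENNReal.ofReal (Real.exp (ξ 0)) :=
    ENNReal.measurable_ofReal.comp (Real.measurable_exp.comp (measurable_pi_apply 0))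
  calc ENNReal.ofReal (Real.exp (-(t V)) * α V) * μ (π ⁻¹' B)
      = ENNReal.ofReal (Real.exp (-(t V))) * (ENNReal.ofReal (α V) * m B) := by
        rw [ENNReal.ofReal_mul (Real.exp_nonneg _), hmB, mul_assoc]
    _ ≤ ENNReal.ofReal (Real.exp (-(t V))) * ρ B := by gcongr
    _ = ∫⁻ _ in π ⁻¹' B ∩ A, ENNReal.ofReal (Real.exp (-(t V))) ∂μ := by
        rw [setLIntegral_const, hρB]
    _ ≤ ∫⁻ ξ in π ⁻¹' B ∩ A, ENNReal.ofReal (Real.exp (ξ 0)) ∂μ := by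
        apply setLIntegral_mono hmint
        intro ξ hξ
        exact ENNReal.ofReal_le_ofReal (hexp ξ hξ.2)
    _ ≤ ∫⁻ ξ in π ⁻¹' B, ENNReal.ofReal (Real.exp (ξ 0)) ∂μ :=
        lintegral_mono_set Set.inter_subset_left
end
end

section
/- (Upper bound: s ≤ −p*) Suppose that for every i ∈ J the field f_i(σ) := (f_i(σ(z)))_{z∈ℤ^d} is c.a.d.i., c.l. and R_ℓ-invariant. Define s(x) := inf{ liminf_{n→∞} |Λ(n)|^{−1} log P(m_{Λ(n)} σ ∈ A) : A a translate of an element of C_0(X) containing x }, p(λ) := lim_{n→∞} |Λ(n)|^{−1} log E[exp λ(Σ_{z∈Λ(n)} σ(z))] for λ a τ-continuous linear functional on X (this limit exists), and p*(x) := sup_{λ∈X*}(λ(x) − p(λ)). Then for every x ∈ X, s(x) ≤ −p*(x). -/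
open MeasureTheory Filter Topology Pointwise

noncomputable section

section Projective

variable {J : Type*} [Preorder J]
variable {X : Type*} [AddCommGroup X] [Module ℝ X]
variable {Y : J → Type*} [∀ i, AddCommGroup (Y i)] [∀ i, Module ℝ (Y i)]
  [∀ i, UniformSpace (Y i)] [∀ i, IsUniformAddGroup (Y i)] [∀ i, ContinuousSMul ℝ (Y i)]
  [∀ i, LocallyConvexSpace ℝ (Y i)] [∀ i, CompleteSpace (Y i)]
  [∀ i, TopologicalSpace.SeparableSpace (Y i)] [∀ i, TopologicalSpace.MetrizableSpace (Y i)]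

/-- The basic sets C₀(X) = { f_i⁻¹(t·V_i) : i ∈ J, t > 0, V_i an open convex
neighbourhood of 0 in Y_i }. -/
def projC0 (f : ∀ i, X →ₗ[ℝ] Y i) : Set (Set X) :=
  {A | ∃ (i : J) (t : ℝ) (V : Set (Y i)), 0 < t ∧ IsOpen V ∧ Convex ℝ V ∧ (0 : Y i) ∈ V ∧
        A = f i ⁻¹' (t • V)}

/-- All translates of elements of C₀(X); these generate the topology τ and the
σ-algebra F on X. -/
def projGen (f : ∀ i, X →ₗ[ℝ] Y i) : Set (Set X) :=
  {B | ∃ A ∈ projC0 f, ∃ v : X, B = (fun a => v + a) '' A}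

/-- Compatibility conditions of a projective system: each f_{ij} is continuous,
f_{ii} = id, f_i = f_{ij} ∘ f_j and f_{ik} = f_{ij} ∘ f_{jk}. -/
structure IsProjSystem (f : ∀ i, X →ₗ[ℝ] Y i)
    (fij : ∀ i j, i ≤ j → (Y j →ₗ[ℝ] Y i)) : Prop where
  cont : ∀ i j (h : i ≤ j), Continuous (fij i j h)
  id_self : ∀ i, fij i i le_rfl = LinearMap.id
  factor : ∀ i j (h : i ≤ j) (x : X), f i x = fij i j h (f j x)
  comp : ∀ i j k (hij : i ≤ j) (hjk : j ≤ k) (y : Y k),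
    fij i k (hij.trans hjk) y = fij i j hij (fij j k hjk y)

variable {d : ℕ}

/-- Entropy on the projective limit: s(x) = inf over translates A of elements of C₀(X)
containing x of liminf_n |Λ(n)|⁻¹ log P(m_{Λ(n)} σ ∈ A). -/
def entX [FX : MeasurableSpace X] (f : ∀ i, X →ₗ[ℝ] Y i)
    (μ : Measure (Cfg d X)) (x : X) : EReal :=
  ⨅ A ∈ {A : Set X | A ∈ projGen f ∧ x ∈ A},
    Filter.liminf
      (fun n : ℕ => ((((box d 0 n).card : ℝ)⁻¹ : ℝ) : EReal) *
        ENNReal.log (μ {ξ | mAvg (box d 0 n) ξ ∈ A}))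
      Filter.atTop

/-- Finite-volume pressure on the projective limit:
p_Λ(λ) = |Λ|⁻¹ log E[exp λ(Σ_{z∈Λ} σ(z))], valued in [-∞,+∞]. -/
def pressX [FX : MeasurableSpace X] (μ : Measure (Cfg d X))
    (l : X →ₗ[ℝ] ℝ) (Λ : Finset (ZLat d)) : EReal :=
  (((Λ.card : ℝ)⁻¹ : ℝ) : EReal) *
    ENNReal.log (∫⁻ ξ, ENNReal.ofReal (Real.exp (l (∑ z ∈ Λ, ξ z))) ∂μ)

end Projective

/-! Exponential Chebyshev: if `A ∋ x` is a basic set on which a continuous functional `λ`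
exceeds `λ x - ε`, then `P(m_Λ σ ∈ A) ≤ exp (-|Λ| (λ x - ε)) E[exp λ(Σ_Λ σ)]`, whence
`s x ≤ p λ - λ x + ε`. Such an `A` exists because the directedness of the system makes the
translates of `C₀(X)` a basis of `τ`, and the event is measurable because the open sets of the
separable spaces `Y i` are countable unions of open convex sets, so that each `f i` is
`F`-measurable. -/

theorem secondCountableTopology_of_pseudoMetrizable (Z : Type*) [TopologicalSpace Z]
    [TopologicalSpace.PseudoMetrizableSpace Z] [TopologicalSpace.SeparableSpace Z] :
    SecondCountableTopology Z := by
  let := TopologicalSpace.pseudoMetrizableSpacePseudoMetric Z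
  infer_instance

theorem IsOpen.exists_countable_convex_sUnion_eq {E : Type*} [AddCommGroup E] [Module ℝ E]
    [TopologicalSpace E] [IsTopologicalAddGroup E] [ContinuousConstSMul ℝ E]
    [LocallyConvexSpace ℝ E] [SecondCountableTopology E] {O : Set E} (hO : IsOpen O) :
    ∃ 𝒞 : Set (Set E), 𝒞.Countable ∧ (∀ C ∈ 𝒞, IsOpen C ∧ Convex ℝ C) ∧ ⋃₀ 𝒞 = O := by
  obtain ⟨𝒞, h𝒞, h𝒞O, hU⟩ :=
    TopologicalSpace.isOpen_sUnion_countable {C : Set E | IsOpen C ∧ Convex ℝ C ∧ C ⊆ O}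
      fun C hC => hC.1
  refine ⟨𝒞, h𝒞, fun C hC => ⟨(h𝒞O hC).1, (h𝒞O hC).2.1⟩, hU.trans ?_⟩
  refine (Set.sUnion_subset fun C hC => hC.2.2).antisymm fun y hy => ?_
  obtain ⟨s, ⟨hs, hsc⟩, hsO⟩ :=
    (LocallyConvexSpace.convex_basis (𝕜 := ℝ) y).mem_iff.mp (hO.mem_nhds hy)
  exact ⟨interior s, ⟨isOpen_interior, hsc.interior, interior_subset.trans hsO⟩,
    mem_interior_iff_mem_nhds.mpr hs⟩

theorem EReal.continuousAt_add_coe (a : EReal) (r : ℝ) :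
    ContinuousAt (fun p : EReal × EReal => p.1 + p.2) (a, r) :=
  EReal.continuousAt_add (Or.inr (EReal.coe_ne_bot r)) (Or.inr (EReal.coe_ne_top r))

theorem EReal.le_neg_sub_of_forall_lt {s P : EReal} {r : ℝ}
    (h : ∀ c : ℝ, c < r → s ≤ P + ((-c : ℝ) : EReal)) : s ≤ -((r : EReal) - P) := by
  have hlim : Tendsto (fun c : ℝ => P + ((-c : ℝ) : EReal)) (𝓝[<] r)
      (𝓝 (P + ((-r : ℝ) : EReal))) :=
    ((EReal.continuousAt_add_coe P (-r)).tendsto.comp (tendsto_const_nhds.prodMk_nhds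
        ((continuous_coe_real_ereal.comp continuous_neg).tendsto r))).mono_left
      nhdsWithin_le_nhds
  rw [EReal.neg_sub (Or.inl (EReal.coe_ne_bot r)) (Or.inl (EReal.coe_ne_top r)), add_comm]
  exact ge_of_tendsto hlim (eventually_nhdsWithin_of_forall h)

theorem box_nonempty {d : ℕ} (z : ZLat d) {n : ℕ} (hn : 0 < n) : (box d z n).Nonempty :=
  ⟨z, by simp [box, hn]⟩

section Chebyshev

variable {X : Type*} [AddCommGroup X] [Module ℝ X] [MeasurableSpace X] {d : ℕ}

theorem mul_log_measure_le_pressX_add (μ : Measure (Cfg d X)) (l : X →ₗ[ℝ] ℝ)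
    {Λ : Finset (ZLat d)} (hΛ : Λ.Nonempty) {S : Set (Cfg d X)} (hS : MeasurableSet S) {c : ℝ}
    (hc : ∀ ξ ∈ S, c ≤ l (mAvg Λ ξ)) :
    (((Λ.card : ℝ)⁻¹ : ℝ) : EReal) * ENNReal.log (μ S) ≤ pressX μ l Λ + ((-c : ℝ) : EReal) := by
  set N : ℝ := (Λ.card : ℝ)
  have hN : 0 < N := by simpa [N] using hΛ.card_pos
  have hmarkov : ENNReal.ofReal (Real.exp (N * c)) * μ S
      ≤ ∫⁻ ξ, ENNReal.ofReal (Real.exp (l (∑ z ∈ Λ, ξ z))) ∂μ :=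
    calc ENNReal.ofReal (Real.exp (N * c)) * μ S
        = ∫⁻ _ in S, ENNReal.ofReal (Real.exp (N * c)) ∂μ := (setLIntegral_const _ _).symm
      _ ≤ ∫⁻ ξ in S, ENNReal.ofReal (Real.exp (l (∑ z ∈ Λ, ξ z))) ∂μ := by
        refine setLIntegral_mono' hS fun ξ hξ => ?_
        have hsum : l (∑ z ∈ Λ, ξ z) = N * l (mAvg Λ ξ) := by
          simp [mAvg, N, hN.ne']
        gcongr
        rw [hsum]
        exact mul_le_mul_of_nonneg_left (hc ξ hξ) hN.le
      _ ≤ _ := setLIntegral_le_lintegral _ _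
  have hlog : ((N * c : ℝ) : EReal) + ENNReal.log (μ S)
      ≤ ENNReal.log (∫⁻ ξ, ENNReal.ofReal (Real.exp (l (∑ z ∈ Λ, ξ z))) ∂μ) := by
    simpa [ENNReal.log_mul_add, ENNReal.log_ofReal_of_pos (Real.exp_pos _)] using
      ENNReal.log_monotone hmarkov
  calc ((N⁻¹ : ℝ) : EReal) * ENNReal.log (μ S)
      = ((N⁻¹ : ℝ) : EReal) * (((N * c : ℝ) : EReal) + ENNReal.log (μ S))
          + ((-c : ℝ) : EReal) := by
        rw [EReal.left_distrib_of_nonneg_of_ne_top (by positivity) (EReal.coe_ne_top _),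
          ← EReal.coe_mul, inv_mul_cancel_left₀ hN.ne', add_right_comm, ← EReal.coe_add,
          add_neg_cancel, EReal.coe_zero, zero_add]
    _ ≤ pressX μ l Λ + ((-c : ℝ) : EReal) := by
        gcongr
        exact mul_le_mul_of_nonneg_left hlog (EReal.coe_nonneg.2 (inv_nonneg.2 hN.le))

end Chebyshev

section Projective

variable {J : Type*} {X : Type*} [AddCommGroup X] [Module ℝ X]
  {Y : J → Type*} [∀ i, AddCommGroup (Y i)] [∀ i, Module ℝ (Y i)] [∀ i, UniformSpace (Y i)]
  [∀ i, IsUniformAddGroup (Y i)] [∀ i, ContinuousSMul ℝ (Y i)] {f : ∀ i, X →ₗ[ℝ] Y i}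

theorem mem_projGen_iff {A : Set X} :
    A ∈ projGen f ↔ ∃ (i : J) (W : Set (Y i)), IsOpen W ∧ Convex ℝ W ∧ A.Nonempty ∧
      A = f i ⁻¹' W := by
  constructor
  · rintro ⟨_, ⟨i, t, V, ht, hVo, hVc, hV0, rfl⟩, v, rfl⟩
    refine ⟨i, f i v +ᵥ t • V, (hVo.smul₀ ht.ne').vadd _, (hVc.smul t).vadd _,
      ⟨v, 0, by simpa using Set.smul_mem_smul_set (a := t) hV0, add_zero v⟩, ?_⟩
    ext a
    simp [Set.mem_vadd_set_iff_neg_vadd_mem]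
  · rintro ⟨i, W, hWo, hWc, ⟨v, hv⟩, rfl⟩
    refine ⟨f i ⁻¹' ((1 : ℝ) • (-f i v +ᵥ W)), ⟨i, 1, -f i v +ᵥ W, one_pos, hWo.vadd _,
      hWc.vadd _, ?_, rfl⟩, v, ?_⟩
    · simpa [Set.mem_vadd_set_iff_neg_vadd_mem] using hv
    · ext a
      simp [Set.mem_vadd_set_iff_neg_vadd_mem]

theorem univ_mem_projGen [Nonempty J] : Set.univ ∈ projGen f :=
  let ⟨i⟩ := ‹Nonempty J›
  mem_projGen_iff.2 ⟨i, Set.univ, isOpen_univ, convex_univ, ⟨0, trivial⟩, rfl⟩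

theorem inter_mem_projGen [Preorder J] [IsDirected J (· ≤ ·)]
    {fij : ∀ i j, i ≤ j → (Y j →ₗ[ℝ] Y i)} (hsys : IsProjSystem f fij) {A B : Set X}
    (hA : A ∈ projGen f) (hB : B ∈ projGen f) (hAB : (A ∩ B).Nonempty) :
    A ∩ B ∈ projGen f := by
  obtain ⟨i, V, hVo, hVc, -, rfl⟩ := mem_projGen_iff.1 hA
  obtain ⟨j, W, hWo, hWc, -, rfl⟩ := mem_projGen_iff.1 hB
  obtain ⟨k, hik, hjk⟩ := exists_ge_ge i j
  refine mem_projGen_iff.2 ⟨k, fij i k hik ⁻¹' V ∩ fij j k hjk ⁻¹' W,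
    (hVo.preimage (hsys.cont i k hik)).inter (hWo.preimage (hsys.cont j k hjk)),
    (hVc.linear_preimage _).inter (hWc.linear_preimage _), hAB, ?_⟩
  ext a
  simp [hsys.factor i k hik, hsys.factor j k hjk]

theorem isTopologicalBasis_projGen [Preorder J] [IsDirected J (· ≤ ·)] [Nonempty J]
    {fij : ∀ i j, i ≤ j → (Y j →ₗ[ℝ] Y i)} (hsys : IsProjSystem f fij)
    [τX : TopologicalSpace X] (hτ : τX = TopologicalSpace.generateFrom (projGen f)) :
    TopologicalSpace.IsTopologicalBasis (projGen f) :=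
  ⟨fun _ hA _ hB x hx => ⟨_, inter_mem_projGen hsys hA hB ⟨x, hx⟩, hx, subset_rfl⟩,
    Set.sUnion_eq_univ_iff.2 fun _ => ⟨_, univ_mem_projGen, trivial⟩, hτ⟩

variable [∀ i, LocallyConvexSpace ℝ (Y i)] [∀ i, TopologicalSpace.SeparableSpace (Y i)]
  [∀ i, TopologicalSpace.MetrizableSpace (Y i)] [∀ i, MeasurableSpace (Y i)]
  [∀ i, BorelSpace (Y i)] [FX : MeasurableSpace X]

theorem measurable_of_eq_generateFrom_projGen
    (hF : FX = MeasurableSpace.generateFrom (projGen f)) (i : J) : Measurable (f i) := by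
  have := secondCountableTopology_of_pseudoMetrizable (Y i)
  refine measurable_of_isOpen fun O hO => ?_
  obtain ⟨𝒞, h𝒞, h𝒞c, rfl⟩ := hO.exists_countable_convex_sUnion_eq
  rw [Set.preimage_sUnion]
  refine .biUnion h𝒞 fun C hC => ?_
  rcases (f i ⁻¹' C).eq_empty_or_nonempty with h | h
  · rw [h]
    exact .empty
  · rw [hF]
    exact MeasurableSpace.measurableSet_generateFrom
      (mem_projGen_iff.2 ⟨i, C, (h𝒞c C hC).1, (h𝒞c C hC).2, h, rfl⟩)

theorem measurableSet_mAvg_mem {d : ℕ} (hF : FX = MeasurableSpace.generateFrom (projGen f))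
    {A : Set X} (hA : A ∈ projGen f) (Λ : Finset (ZLat d)) :
    MeasurableSet {ξ : Cfg d X | mAvg Λ ξ ∈ A} := by
  obtain ⟨i, W, hWo, -, -, rfl⟩ := mem_projGen_iff.1 hA
  have := secondCountableTopology_of_pseudoMetrizable (Y i)
  have hfi := measurable_of_eq_generateFrom_projGen hF i
  have : Measurable fun ξ : Cfg d X => f i (mAvg Λ ξ) := by
    simp only [mAvg, map_smul, map_sum]
    exact (Finset.measurable_sum _ fun z _ => hfi.comp (measurable_pi_apply z)).const_smul _
  exact this hWo.measurableSet

theorem entX_le_add_of_tendsto_pressX [Preorder J] [IsDirected J (· ≤ ·)] [Nonempty J]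
    {fij : ∀ i j, i ≤ j → (Y j →ₗ[ℝ] Y i)} (hsys : IsProjSystem f fij)
    [τX : TopologicalSpace X] (hτ : τX = TopologicalSpace.generateFrom (projGen f))
    (hF : FX = MeasurableSpace.generateFrom (projGen f)) {d : ℕ} {μ : Measure (Cfg d X)}
    {l : X →ₗ[ℝ] ℝ} (hl : Continuous l) {P : EReal}
    (hp : Tendsto (fun n : ℕ => pressX μ l (box d 0 n)) atTop (𝓝 P)) {x : X} {c : ℝ}
    (hc : c < l x) :
    entX f μ x ≤ P + ((-c : ℝ) : EReal) := by
  obtain ⟨A, hA, hxA, hAc⟩ := (isTopologicalBasis_projGen hsys hτ).mem_nhds_iff.1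
    ((isOpen_lt continuous_const hl).mem_nhds hc)
  have hshift : Tendsto (fun n : ℕ => pressX μ l (box d 0 n) + ((-c : ℝ) : EReal)) atTop
      (𝓝 (P + ((-c : ℝ) : EReal))) :=
    (EReal.continuousAt_add_coe P (-c)).tendsto.comp (hp.prodMk_nhds tendsto_const_nhds)
  calc entX f μ x
      ≤ liminf (fun n : ℕ => ((((box d 0 n).card : ℝ)⁻¹ : ℝ) : EReal) *
          ENNReal.log (μ {ξ | mAvg (box d 0 n) ξ ∈ A})) atTop := iInf₂_le A ⟨hA, hxA⟩
    _ ≤ liminf (fun n : ℕ => pressX μ l (box d 0 n) + ((-c : ℝ) : EReal)) atTop :=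
      liminf_le_liminf <| eventually_atTop.2 ⟨1, fun n hn =>
        mul_log_measure_le_pressX_add μ l (box_nonempty 0 hn) (measurableSet_mAvg_mem hF hA _)
          fun _ hξ => (hAc hξ).le⟩
    _ = P + ((-c : ℝ) : EReal) := hshift.liminf_eq

end Projective

variable {J : Type*} [Preorder J] [IsDirected J (· ≤ ·)] [Nonempty J]
variable {X : Type*} [AddCommGroup X] [Module ℝ X]
variable {Y : J → Type*} [∀ i, AddCommGroup (Y i)] [∀ i, Module ℝ (Y i)]
  [∀ i, UniformSpace (Y i)] [∀ i, IsUniformAddGroup (Y i)] [∀ i, ContinuousSMul ℝ (Y i)]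
  [∀ i, LocallyConvexSpace ℝ (Y i)] [∀ i, CompleteSpace (Y i)]
  [∀ i, TopologicalSpace.SeparableSpace (Y i)] [∀ i, TopologicalSpace.MetrizableSpace (Y i)]
  [∀ i, MeasurableSpace (Y i)] [∀ i, BorelSpace (Y i)]

theorem entropy_le_neg_pressure_conj_general {d : ℕ}
    (f : ∀ i, X →ₗ[ℝ] Y i) (fij : ∀ i j, i ≤ j → (Y j →ₗ[ℝ] Y i))
    (hsys : IsProjSystem f fij)
    [τX : TopologicalSpace X]
    (hτ : τX = TopologicalSpace.generateFrom (projGen f))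
    [FX : MeasurableSpace X]
    (hF : FX = MeasurableSpace.generateFrom (projGen f))
    (μ : Measure (Cfg d X))
    (p : (X →ₗ[ℝ] ℝ) → EReal)
    (hp : ∀ l : X →ₗ[ℝ] ℝ, Continuous l →
      Tendsto (fun n : ℕ => pressX μ l (box d 0 n)) atTop (𝓝 (p l))) :
    ∀ x : X, entX f μ x ≤
      - ⨆ l : {l : X →ₗ[ℝ] ℝ // Continuous l}, (((l.1 x : ℝ) : EReal) - p l.1) := by
  intro x
  refine EReal.le_neg_of_le_neg (iSup_le fun l => EReal.le_neg_of_le_neg ?_)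
  exact EReal.le_neg_sub_of_forall_lt fun c hc =>
    entX_le_add_of_tendsto_pressX hsys hτ hF l.2 (hp l.1 l.2) hc

/-- upper bound s ≤ -p*: under the same hypotheses, with
p(λ) = lim_n p_{Λ(n)}(λ) (the limit exists) and p*(x) = sup_{λ∈X*}(λ(x) - p(λ)),
one has s(x) ≤ -p*(x) for every x ∈ X. -/
theorem entropy_le_neg_pressure_conj {d : ℕ} (hd : 0 < d)
    (f : ∀ i, X →ₗ[ℝ] Y i) (fij : ∀ i j, i ≤ j → (Y j →ₗ[ℝ] Y i))
    (hsys : IsProjSystem f fij)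
    [τX : TopologicalSpace X]
    (hτ : τX = TopologicalSpace.generateFrom (projGen f))
    [FX : MeasurableSpace X]
    (hF : FX = MeasurableSpace.generateFrom (projGen f))
    (μ : Measure (Cfg d X)) [IsProbabilityMeasure μ]
    (ℓ : ℕ) (hℓ : 0 < ℓ)
    (hcadi : ∀ i, ∃ g c : ℕ → ℝ, CadiParams d g c ∧
      IsCadi (Measure.map (fun ξ : Cfg d X => fun z : ZLat d => f i (ξ z)) μ) g c)
    (hcl : ∀ i, ∃ t α : Set (Y i) → ℝ, ClParams t α ∧
      IsCl (Measure.map (fun ξ : Cfg d X => fun z : ZLat d => f i (ξ z)) μ) t α)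
    (hinv : ∀ i, IsRlInv (Measure.map (fun ξ : Cfg d X => fun z : ZLat d => f i (ξ z)) μ) ℓ)
    (p : (X →ₗ[ℝ] ℝ) → EReal)
    (hp : ∀ l : X →ₗ[ℝ] ℝ, Continuous l →
      Tendsto (fun n : ℕ => pressX μ l (box d 0 n)) atTop (𝓝 (p l))) :
    ∀ x : X, entX f μ x ≤
      - ⨆ l : {l : X →ₗ[ℝ] ℝ // Continuous l}, (((l.1 x : ℝ) : EReal) - p l.1) :=
  entropy_le_neg_pressure_conj_general f fij hsys (τX := τX) hτ (FX := FX) hF μ p hp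
end
end
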